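/- arXiv:2108.02693 — 2 statements merged into one kernel-verified Lean document; each statement's English description precedes it below -/
import Mathlib

section
/- Cauchy sets are acausal: in an approximating Lorentzian pre-length space with limit curves over a proper metric space, if S is a Cauchy set and p, q ∈ S with p < q, then a contradiction follows; i.e., no two distinct points of S are causally related. -/
open Set Filter Topology MeasureTheory TopologicalSpace

/-- A Lorentzian pre-length space structure on a metric space `X`:
a preorder `causal` (≤), a transitive relation `chron` (≪) contained in `causal`,
and a lower semicontinuous time separation function `tau` satisfying the usual axioms. -/
structure LPLS (X : Type*) [MetricSpace X] where
  causal : X → X → Prop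
  chron : X → X → Prop
  tau : X → X → ENNReal
  causal_refl : ∀ x, causal x x
  causal_trans : ∀ {x y z}, causal x y → causal y z → causal x z
  chron_trans : ∀ {x y z}, chron x y → chron y z → chron x z
  chron_subset_causal : ∀ {x y}, chron x y → causal x y
  tau_lsc : LowerSemicontinuous fun p : X × X => tau p.1 p.2
  tau_pos : ∀ {x y}, chron x y → 0 < tau x y
  tau_eq_zero : ∀ {x y}, ¬ causal x y → tau x y = 0
  tau_superadd : ∀ {x y z}, causal x y → causal y z → tau x y + tau y z ≤ tau x z

variable {X : Type*} [MetricSpace X]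

namespace LPLS

/-- chronological future `I⁺(p)` -/
def Iplus (L : LPLS X) (p : X) : Set X := {x | L.chron p x}
/-- chronological past `I⁻(p)` -/
def Iminus (L : LPLS X) (p : X) : Set X := {x | L.chron x p}
/-- causal future `J⁺(p)` -/
def Jplus (L : LPLS X) (p : X) : Set X := {x | L.causal p x}
/-- causal past `J⁻(p)` -/
def Jminus (L : LPLS X) (p : X) : Set X := {x | L.causal x p}

def IplusSet (L : LPLS X) (S : Set X) : Set X := ⋃ p ∈ S, L.Iplus p
def IminusSet (L : LPLS X) (S : Set X) : Set X := ⋃ p ∈ S, L.Iminus p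
def JplusSet (L : LPLS X) (S : Set X) : Set X := ⋃ p ∈ S, L.Jplus p
def JminusSet (L : LPLS X) (S : Set X) : Set X := ⋃ p ∈ S, L.Jminus p

/-- a map is locally Lipschitz on a set `I` -/
def LocLipOn (I : Set ℝ) (γ : ℝ → X) : Prop :=
  ∀ s ∈ I, ∃ K : NNReal, ∃ U ∈ nhdsWithin s I, LipschitzOnWith K γ U

/-- future-directed causal curve with parameter domain `I`:
non-constant, locally Lipschitz and monotone with respect to the causal relation. -/
def IsCausalCurveOn (L : LPLS X) (I : Set ℝ) (γ : ℝ → X) : Prop :=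
  (¬ ∀ s ∈ I, ∀ t ∈ I, γ s = γ t) ∧ LocLipOn I γ ∧
    ∀ ⦃s⦄, s ∈ I → ∀ ⦃t⦄, t ∈ I → s < t → L.causal (γ s) (γ t)

/-- future-directed timelike curve with parameter domain `I`. -/
def IsTimelikeCurveOn (L : LPLS X) (I : Set ℝ) (γ : ℝ → X) : Prop :=
  (¬ ∀ s ∈ I, ∀ t ∈ I, γ s = γ t) ∧ LocLipOn I γ ∧
    ∀ ⦃s⦄, s ∈ I → ∀ ⦃t⦄, t ∈ I → s < t → L.chron (γ s) (γ t)

/-- causal path-connectedness -/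
def CausallyPathConnected (L : LPLS X) : Prop :=
  (∀ p q : X, L.causal p q → p ≠ q →
    ∃ γ : ℝ → X, L.IsCausalCurveOn (Icc 0 1) γ ∧ γ 0 = p ∧ γ 1 = q) ∧
  (∀ p q : X, L.chron p q →
    ∃ γ : ℝ → X, L.IsTimelikeCurveOn (Icc 0 1) γ ∧ γ 0 = p ∧ γ 1 = q)

/-- the relation `≤_U`: connected by a causal curve inside `U` -/
def causalIn (L : LPLS X) (U : Set X) (p q : X) : Prop :=
  ∃ γ : ℝ → X, L.IsCausalCurveOn (Icc 0 1) γ ∧ γ 0 = p ∧ γ 1 = q ∧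
    ∀ s ∈ Icc (0:ℝ) 1, γ s ∈ U

/-- every point has a neighbourhood `U` such that `≤_U` is closed -/
def LocallyWeaklyCausallyClosed (L : LPLS X) : Prop :=
  ∀ p : X, ∃ U ∈ 𝓝 p, IsClosed {z : X × X | L.causalIn U z.1 z.2}

/-- `d`-compatibility: local uniform bound for the `d`-arclength of causal curves -/
def DCompatible (L : LPLS X) : Prop :=
  ∀ p : X, ∃ U ∈ 𝓝 p, ∃ C : ℝ, ∀ (I : Set ℝ) (γ : ℝ → X),
    L.IsCausalCurveOn I γ → (∀ s ∈ I, γ s ∈ U) → eVariationOn γ I ≤ ENNReal.ofReal C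

/-- a Lorentzian pre-length space with limit curves: causally path-connected,
locally weakly causally closed and `d`-compatible -/
def HasLimitCurves (L : LPLS X) : Prop :=
  L.CausallyPathConnected ∧ L.LocallyWeaklyCausallyClosed ∧ L.DCompatible

def FutureApproximating (L : LPLS X) : Prop := ∀ p : X, L.Jplus p ⊆ closure (L.Iplus p)
def PastApproximating (L : LPLS X) : Prop := ∀ p : X, L.Jminus p ⊆ closure (L.Iminus p)
def Approximating (L : LPLS X) : Prop := L.FutureApproximating ∧ L.PastApproximating

/-- non-total imprisonment: a uniform arclength bound for causal curves in any compact set -/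
def NonTotallyImprisoning (L : LPLS X) : Prop :=
  ∀ K : Set X, IsCompact K → ∃ C : ℝ, 0 < C ∧ ∀ (I : Set ℝ) (γ : ℝ → X),
    L.IsCausalCurveOn I γ → (∀ s ∈ I, γ s ∈ K) → eVariationOn γ I ≤ ENNReal.ofReal C

/-- future-inextendible (future-directed) causal curve, parametrized on `[0,∞)`;
by the analogue of [KuSa, Lemma 3.12] inextendibility is captured by the
nonexistence of the limit at `+∞`. -/
def IsFutureInextCurve (L : LPLS X) (γ : ℝ → X) : Prop :=
  L.IsCausalCurveOn (Ici 0) γ ∧ ∀ p : X, ¬ Tendsto γ atTop (𝓝 p)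

/-- past-inextendible (future-directed) causal curve, parametrized on `(-∞,0]`. -/
def IsPastInextCurve (L : LPLS X) (γ : ℝ → X) : Prop :=
  L.IsCausalCurveOn (Iic 0) γ ∧ ∀ p : X, ¬ Tendsto γ atBot (𝓝 p)

/-- doubly-inextendible causal curve, parametrized on all of `ℝ`. -/
def IsDoublyInextCurve (L : LPLS X) (γ : ℝ → X) : Prop :=
  L.IsCausalCurveOn univ γ ∧ (∀ p : X, ¬ Tendsto γ atTop (𝓝 p)) ∧
    (∀ p : X, ¬ Tendsto γ atBot (𝓝 p))

/-- a Cauchy set: every doubly-inextendible causal curve meets it exactly once -/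
def IsCauchySet (L : LPLS X) (S : Set X) : Prop :=
  ∀ γ : ℝ → X, L.IsDoublyInextCurve γ →
    (∃ u : ℝ, γ u ∈ S) ∧ ∀ u v : ℝ, γ u ∈ S → γ v ∈ S → γ u = γ v

/-- volume of the open `r`-thickening of `I⁻(p)` -/
noncomputable def Vminus (L : LPLS X) [MeasurableSpace X] (μ : Measure X) (r : ℝ) (p : X) : ℝ :=
  (μ (Metric.thickening r (L.Iminus p))).toReal

/-- the averaged past volume function `t⁻(p) = ∫₀¹ V⁻ᵣ(p) dr` (without the sign) -/
noncomputable def tminus (L : LPLS X) [MeasurableSpace X] (μ : Measure X) (p : X) : ℝ :=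
  ∫ r in Ioo (0:ℝ) 1, L.Vminus μ r p

/-- full support: every nonempty open set has positive measure -/
def FullSupport [MeasurableSpace X] (μ : Measure X) : Prop :=
  ∀ U : Set X, IsOpen U → U.Nonempty → 0 < μ U

end LPLS

/-!
Suppose `p ≤ q`, `p ≠ q`, both in `S`. Extend `p, q` to a bi-infinite causal chain by greedy steps:
from `x` jump to some `z ∈ J⁺(x)` with `min (d x z) 1` at least half its supremum over `J⁺(x)`,
and symmetrically into the past. Joining consecutive points by causal curves gives a causal curve
through `p` and `q`. It is inextendible: if it converged to `r`, choose `z ≫ r`, `z ≠ r`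
(approximation and causal path connectedness); by lower semicontinuity of `τ` all points near `r`
lie in `J⁻(z)`, so the greedy steps stay bounded below while they must tend to `0`. Hence the curve
meets the Cauchy set `S` twice, at `p` and at `q`.
-/

/-- The concatenation of curves `c n : [0, 1] → Y`, the `n`-th one traversed on `[n, n + 1]`. -/
noncomputable def concatCurves {Y : Type*} (c : ℤ → ℝ → Y) (t : ℝ) : Y := c ⌊t⌋ (Int.fract t)

/-- The bi-infinite sequence `…, t (t p), t p, p, q, s q, s (s q), …`, with `p` at index `-1`
and `q` at index `0`. -/
def biIterate {Y : Type*} (s t : Y → Y) (p q : Y) : ℤ → Y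
  | .ofNat k => s^[k] q
  | .negSucc k => t^[k] p

/-- How far `R` reaches from `x`, with distances truncated at `1` so that the supremum is finite. -/
noncomputable def reachRadius (R : X → X → Prop) (x : X) : ℝ :=
  sSup ((fun z => min (dist x z) 1) '' {z | R x z})

lemma sub_mem_Icc_zero_one {n t : ℝ} (ht : t ∈ Icc n (n + 1)) : t - n ∈ Icc (0 : ℝ) 1 :=
  ⟨sub_nonneg.mpr ht.1, by linarith [ht.2]⟩

lemma LipschitzOnWith.Icc_union_Icc {f : ℝ → X} {K : NNReal} {a b c : ℝ}
    (hab : LipschitzOnWith K f (Icc a b)) (hbc : LipschitzOnWith K f (Icc b c)) :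
    LipschitzOnWith K f (Icc a c) := by
  have key : ∀ x ∈ Icc a c, ∀ y ∈ Icc a c, x ≤ y → dist (f x) (f y) ≤ K * dist x y := by
    intro x hx y hy hxy
    by_cases hyb : y ≤ b
    · exact hab.dist_le_mul x ⟨hx.1, hxy.trans hyb⟩ y ⟨hy.1, hyb⟩
    by_cases hbx : b ≤ x
    · exact hbc.dist_le_mul x ⟨hbx, hx.2⟩ y ⟨hbx.trans hxy, hy.2⟩
    push Not at hyb hbx
    calc dist (f x) (f y) ≤ dist (f x) (f b) + dist (f b) (f y) := dist_triangle _ _ _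
      _ ≤ K * dist x b + K * dist b y := add_le_add
          (hab.dist_le_mul x ⟨hx.1, hbx.le⟩ b ⟨hx.1.trans hbx.le, le_rfl⟩)
          (hbc.dist_le_mul b ⟨le_rfl, hyb.le.trans hy.2⟩ y ⟨hyb.le, hy.2⟩)
      _ = K * dist x y := by
          rw [Real.dist_eq, Real.dist_eq, Real.dist_eq, abs_of_neg (by linarith),
            abs_of_neg (by linarith), abs_of_neg (by linarith)]
          ring
  refine LipschitzOnWith.of_dist_le_mul fun x hx y hy => ?_
  rcases le_total x y with hxy | hyx
  · exact key x hx y hy hxy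
  · rw [dist_comm, dist_comm x]
    exact key y hy x hx hyx

section Concat

variable {Y : Type*} {c : ℤ → ℝ → Y}

@[simp]
lemma concatCurves_intCast (c : ℤ → ℝ → Y) (n : ℤ) : concatCurves c n = c n 0 := by
  simp [concatCurves]

lemma concatCurves_of_mem_Icc (hmatch : ∀ n, c n 1 = c (n + 1) 0) {n : ℤ} {t : ℝ}
    (ht : t ∈ Icc (n : ℝ) (n + 1)) : concatCurves c t = c n (t - n) := by
  rcases ht.2.eq_or_lt with rfl | hlt
  · rw [add_sub_cancel_left, hmatch]
    exact_mod_cast concatCurves_intCast c (n + 1)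
  · simp [concatCurves, Int.fract, Int.floor_eq_iff.mpr ⟨ht.1, hlt⟩]

lemma lipschitzOnWith_concatCurves [MetricSpace Y] (hmatch : ∀ n, c n 1 = c (n + 1) 0) {n : ℤ}
    {K : NNReal} (hK : LipschitzOnWith K (c n) (Icc 0 1)) :
    LipschitzOnWith K (concatCurves c) (Icc (n : ℝ) (n + 1)) := by
  refine LipschitzOnWith.of_dist_le_mul fun x hx y hy => ?_
  rw [concatCurves_of_mem_Icc hmatch hx, concatCurves_of_mem_Icc hmatch hy,
    ← dist_sub_right x y n]
  exact hK.dist_le_mul _ (sub_mem_Icc_zero_one hx) _ (sub_mem_Icc_zero_one hy)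

lemma locallyLipschitz_concatCurves [MetricSpace Y] (hmatch : ∀ n, c n 1 = c (n + 1) 0)
    (hc : ∀ n, LocallyLipschitzOn (Icc 0 1) (c n)) : LocallyLipschitz (concatCurves c) := by
  choose K hK using fun n => (hc n).exists_lipschitzOnWith_of_compact isCompact_Icc
  intro s
  set n := ⌊s⌋
  have hleft := (lipschitzOnWith_concatCurves hmatch (hK (n - 1))).weaken
    (le_max_left (K (n - 1)) (K n))
  have hright := (lipschitzOnWith_concatCurves hmatch (hK n)).weaken
    (le_max_right (K (n - 1)) (K n))
  push_cast at hleft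
  refine ⟨_, Icc ((n : ℝ) - 1) (n + 1), Icc_mem_nhds ?_ (Int.lt_floor_add_one s),
    hleft.Icc_union_Icc (by simpa using hright)⟩
  linarith [Int.floor_le s]

end Concat

lemma biIterate_rel {Y : Type*} {R : Y → Y → Prop} {s t : Y → Y} {p q : Y}
    (hs : ∀ y, R y (s y)) (ht : ∀ y, R (t y) y) (hpq : R p q) (n : ℤ) :
    R (biIterate s t p q n) (biIterate s t p q (n + 1)) := by
  rcases n with k | _ | k
  · show R (s^[k] q) (s^[k + 1] q)
    rw [Function.iterate_succ_apply']
    exact hs _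
  · exact hpq
  · show R (t^[k + 1] p) (t^[k] p)
    rw [Function.iterate_succ_apply']
    exact ht _

section ReachRadius

variable {R : X → X → Prop}

lemma min_dist_le_reachRadius {x z : X} (h : R x z) : min (dist x z) 1 ≤ reachRadius R x :=
  le_csSup ⟨1, by rintro _ ⟨w, -, rfl⟩; exact min_le_right _ _⟩ ⟨z, h, rfl⟩

lemma exists_half_reachRadius_le_dist {x : X} (h : ∃ z, R x z ∧ z ≠ x) :
    ∃ z, R x z ∧ z ≠ x ∧ reachRadius R x / 2 ≤ dist x z := by
  obtain ⟨z₀, hz₀, hz₀x⟩ := h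
  have hpos : 0 < reachRadius R x :=
    (lt_min (dist_pos.mpr hz₀x.symm) one_pos).trans_le (min_dist_le_reachRadius hz₀)
  obtain ⟨_, ⟨z, hz, rfl⟩, hlt⟩ :=
    exists_lt_of_lt_csSup (Nonempty.image _ ⟨z₀, hz₀⟩) (half_lt_self hpos)
  have hfar : reachRadius R x / 2 < dist x z := hlt.trans_le (min_le_left _ _)
  refine ⟨z, hz, ?_, hfar.le⟩
  rintro rfl
  rw [dist_self] at hfar
  linarith

/-- The steps of `u` tend to `0`, while near `r` the reach of `R` stays above
`min (dist r z) 1 / 2`. -/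
lemma not_tendsto_of_half_reachRadius_le_dist {u : ℕ → X}
    (hu : ∀ k, reachRadius R (u k) / 2 ≤ dist (u k) (u (k + 1))) {r z : X} (hzr : z ≠ r)
    (hR : ∀ᶠ y in 𝓝 r, R y z) : ¬ Tendsto u atTop (𝓝 r) := by
  intro hr
  set δ := min (dist r z) 1
  have hδ : 0 < δ := lt_min (dist_pos.mpr hzr.symm) one_pos
  have hreach : ∀ᶠ k in atTop, δ / 2 < min (dist (u k) z) 1 :=
    ((hr.dist tendsto_const_nhds).min tendsto_const_nhds).eventually (lt_mem_nhds (half_lt_self hδ))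
  have hstep : Tendsto (fun k => dist (u k) (u (k + 1))) atTop (𝓝 0) := by
    simpa using hr.dist (hr.comp (tendsto_add_atTop_nat 1))
  obtain ⟨k, hk_reach, hk_step, hk_R⟩ := (hreach.and ((hstep.eventually
    (gt_mem_nhds (by positivity : 0 < δ / 4))).and (hr.eventually hR))).exists
  linarith [min_dist_le_reachRadius hk_R, hu k]

end ReachRadius

namespace LPLS

variable {L : LPLS X}

lemma locLipOn_iff_locallyLipschitzOn {I : Set ℝ} {γ : ℝ → X} :
    LocLipOn I γ ↔ LocallyLipschitzOn I γ :=
  Iff.rfl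

instance (L : LPLS X) : Std.Refl L.causal := ⟨L.causal_refl⟩

instance (L : LPLS X) : IsTrans X L.causal := ⟨fun _ _ _ => L.causal_trans⟩

lemma IsCausalCurveOn.causal_of_le {I : Set ℝ} {γ : ℝ → X} (hγ : L.IsCausalCurveOn I γ)
    {s t : ℝ} (hs : s ∈ I) (ht : t ∈ I) (hst : s ≤ t) : L.causal (γ s) (γ t) := by
  rcases hst.eq_or_lt with rfl | hlt
  · exact L.causal_refl _
  · exact hγ.2.2 hs ht hlt

section Concat

variable {c : ℤ → ℝ → X}

lemma causal_concatCurves_of_mem_Icc (hmatch : ∀ n, c n 1 = c (n + 1) 0)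
    (hc : ∀ n, L.IsCausalCurveOn (Icc 0 1) (c n)) {n : ℤ} {s t : ℝ}
    (hs : s ∈ Icc (n : ℝ) (n + 1)) (ht : t ∈ Icc (n : ℝ) (n + 1)) (hst : s ≤ t) :
    L.causal (concatCurves c s) (concatCurves c t) := by
  rw [concatCurves_of_mem_Icc hmatch hs, concatCurves_of_mem_Icc hmatch ht]
  exact (hc n).causal_of_le (sub_mem_Icc_zero_one hs) (sub_mem_Icc_zero_one ht) (by linarith)

lemma causal_concatCurves (hmatch : ∀ n, c n 1 = c (n + 1) 0)
    (hc : ∀ n, L.IsCausalCurveOn (Icc 0 1) (c n)) {s t : ℝ} (hst : s ≤ t) :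
    L.causal (concatCurves c s) (concatCurves c t) := by
  have piece := @causal_concatCurves_of_mem_Icc _ _ L c hmatch hc
  have hmem : ∀ u : ℝ, u ∈ Icc (⌊u⌋ : ℝ) (⌊u⌋ + 1) :=
    fun u => ⟨Int.floor_le u, (Int.lt_floor_add_one u).le⟩
  rcases (Int.floor_le_floor hst).eq_or_lt with hfloor | hfloor
  · exact piece (hmem s) (hfloor ▸ hmem t) hst
  have hinteger : L.causal (concatCurves c (⌊s⌋ + 1 : ℤ)) (concatCurves c ⌊t⌋) :=
    Int.rel_of_forall_rel_succ_of_le L.causal (f := fun n : ℤ => concatCurves c n)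
      (fun n => by
        push_cast
        exact piece (s := n) (t := n + 1) ⟨le_rfl, by linarith⟩ ⟨by linarith, le_rfl⟩ (by linarith))
      hfloor
  have hfirst : L.causal (concatCurves c s) (concatCurves c (⌊s⌋ + 1 : ℤ)) := by
    push_cast
    exact piece (hmem s) ⟨by linarith [Int.floor_le s], le_rfl⟩ (hmem s).2
  have hlast : L.causal (concatCurves c ⌊t⌋) (concatCurves c t) :=
    piece ⟨le_rfl, by linarith⟩ (hmem t) (Int.floor_le t)
  exact L.causal_trans hfirst (L.causal_trans hinteger hlast)

lemma isCausalCurveOn_concatCurves (hmatch : ∀ n, c n 1 = c (n + 1) 0)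
    (hc : ∀ n, L.IsCausalCurveOn (Icc 0 1) (c n)) (hne : c 0 0 ≠ c 0 1) :
    L.IsCausalCurveOn univ (concatCurves c) := by
  refine ⟨fun h => hne ?_, ?_, fun s _ t _ hst => causal_concatCurves hmatch hc hst.le⟩
  · have h01 := h ((0 : ℤ) : ℝ) trivial ((1 : ℤ) : ℝ) trivial
    rwa [concatCurves_intCast, concatCurves_intCast, ← zero_add (1 : ℤ), ← hmatch] at h01
  · exact locLipOn_iff_locallyLipschitzOn.mpr <| locallyLipschitzOn_univ.mpr <|
      locallyLipschitz_concatCurves hmatch fun n => (hc n).2.1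

end Concat

lemma exists_causalCurve_through (hpc : L.CausallyPathConnected) {x : ℤ → X}
    (hx : ∀ n, L.causal (x n) (x (n + 1)) ∧ x n ≠ x (n + 1)) :
    ∃ γ, L.IsCausalCurveOn univ γ ∧ ∀ n : ℤ, γ n = x n := by
  choose c hc hc0 hc1 using fun n => hpc.1 _ _ (hx n).1 (hx n).2
  have hmatch : ∀ n, c n 1 = c (n + 1) 0 := fun n => by rw [hc1, hc0]
  refine ⟨concatCurves c, isCausalCurveOn_concatCurves hmatch hc ?_, fun n => ?_⟩
  · rw [hc0, hc1]
    exact (hx 0).2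
  · rw [concatCurves_intCast, hc0]

lemma eventually_causal_of_chron {x z : X} (h : L.chron x z) :
    ∀ᶠ w in 𝓝 (x, z), L.causal w.1 w.2 := by
  filter_upwards [L.tau_lsc (x, z) 0 (L.tau_pos h)] with w hw
  by_contra hw'
  simp [L.tau_eq_zero hw'] at hw

lemma exists_chron_ne_of_futureApproximating (hfut : L.FutureApproximating)
    (hpc : L.CausallyPathConnected) (x : X) : ∃ z, L.chron x z ∧ z ≠ x := by
  obtain ⟨w, hw⟩ := closure_nonempty_iff.mp ⟨x, hfut x (L.causal_refl x)⟩
  obtain ⟨σ, hσ, hσ0, -⟩ := hpc.2 x w hw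
  obtain ⟨t, ht, hne⟩ : ∃ t ∈ Icc (0 : ℝ) 1, σ t ≠ x := by
    by_contra! h
    exact hσ.1 fun a ha b hb => (h a ha).trans (h b hb).symm
  have ht0 : 0 < t := ht.1.lt_of_ne (by rintro rfl; exact hne hσ0)
  exact ⟨σ t, hσ0 ▸ hσ.2.2 (left_mem_Icc.mpr zero_le_one) ht ht0, hne⟩

lemma exists_chron_ne_of_pastApproximating (hpast : L.PastApproximating)
    (hpc : L.CausallyPathConnected) (x : X) : ∃ z, L.chron z x ∧ z ≠ x := by
  obtain ⟨w, hw⟩ := closure_nonempty_iff.mp ⟨x, hpast x (L.causal_refl x)⟩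
  obtain ⟨σ, hσ, -, hσ1⟩ := hpc.2 w x hw
  obtain ⟨t, ht, hne⟩ : ∃ t ∈ Icc (0 : ℝ) 1, σ t ≠ x := by
    by_contra! h
    exact hσ.1 fun a ha b hb => (h a ha).trans (h b hb).symm
  have ht1 : t < 1 := ht.2.lt_of_ne (by rintro rfl; exact hne hσ1)
  exact ⟨σ t, hσ1 ▸ hσ.2.2 ht (right_mem_Icc.mpr zero_le_one) ht1, hne⟩

lemma not_tendsto_iterate_of_futureApproximating (hfut : L.FutureApproximating)
    (hpc : L.CausallyPathConnected) {s : X → X}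
    (hs : ∀ y, reachRadius L.causal y / 2 ≤ dist y (s y)) (x r : X) :
    ¬ Tendsto (fun k => s^[k] x) atTop (𝓝 r) := by
  obtain ⟨z, hrz, hzr⟩ := L.exists_chron_ne_of_futureApproximating hfut hpc r
  refine not_tendsto_of_half_reachRadius_le_dist (fun k => ?_) hzr
    ((tendsto_id.prodMk_nhds tendsto_const_nhds).eventually (L.eventually_causal_of_chron hrz))
  rw [Function.iterate_succ_apply']
  exact hs _

lemma not_tendsto_iterate_of_pastApproximating (hpast : L.PastApproximating)
    (hpc : L.CausallyPathConnected) {t : X → X}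
    (ht : ∀ y, reachRadius (flip L.causal) y / 2 ≤ dist y (t y)) (x r : X) :
    ¬ Tendsto (fun k => t^[k] x) atTop (𝓝 r) := by
  obtain ⟨z, hzr, hne⟩ := L.exists_chron_ne_of_pastApproximating hpast hpc r
  refine not_tendsto_of_half_reachRadius_le_dist (R := flip L.causal) (fun k => ?_) hne
    ((tendsto_const_nhds.prodMk_nhds tendsto_id).eventually (L.eventually_causal_of_chron hzr))
  rw [Function.iterate_succ_apply']
  exact ht _

lemma isDoublyInextCurve_of_biIterate (happ : L.Approximating) (hpc : L.CausallyPathConnected)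
    {s t : X → X} (hs : ∀ y, reachRadius L.causal y / 2 ≤ dist y (s y))
    (ht : ∀ y, reachRadius (flip L.causal) y / 2 ≤ dist y (t y)) {p q : X} {γ : ℝ → X}
    (hγ : L.IsCausalCurveOn univ γ) (hγx : ∀ n : ℤ, γ n = biIterate s t p q n) :
    L.IsDoublyInextCurve γ := by
  refine ⟨hγ, fun r hr => L.not_tendsto_iterate_of_futureApproximating happ.1 hpc hs q r ?_,
    fun r hr => L.not_tendsto_iterate_of_pastApproximating happ.2 hpc ht p r ?_⟩
  · have htop : Tendsto (fun k : ℕ => ((k : ℤ) : ℝ)) atTop atTop := by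
      simpa using tendsto_natCast_atTop_atTop
    exact (hr.comp htop).congr fun k => hγx k
  · have hbot : Tendsto (fun k : ℕ => ((Int.negSucc k : ℤ) : ℝ)) atTop atBot := by
      have : Tendsto (fun k : ℕ => -((k : ℝ) + 1)) atTop atBot := tendsto_neg_atTop_atBot.comp
        (tendsto_atTop_add_const_right _ 1 tendsto_natCast_atTop_atTop)
      simpa [Int.cast_negSucc] using this
    exact (hr.comp hbot).congr fun k => hγx (Int.negSucc k)

end LPLS

theorem LPLS.cauchySet_acausal_general {X : Type*} [MetricSpace X]
    (L : LPLS X) (happ : L.Approximating) (hlc : L.HasLimitCurves)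
    {S : Set X} (hS : L.IsCauchySet S) :
    ∀ p ∈ S, ∀ q ∈ S, L.causal p q → p = q := by
  intro p hp q hq hpq
  by_contra hne
  choose s hs_causal hs_ne hs_far using fun x => exists_half_reachRadius_le_dist
    ((L.exists_chron_ne_of_futureApproximating happ.1 hlc.1 x).imp
      fun _ h => ⟨L.chron_subset_causal h.1, h.2⟩)
  choose t ht_causal ht_ne ht_far using fun x => exists_half_reachRadius_le_dist
    (R := flip L.causal) ((L.exists_chron_ne_of_pastApproximating happ.2 hlc.1 x).imp
      fun _ h => ⟨L.chron_subset_causal h.1, h.2⟩)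
  obtain ⟨γ, hγ, hγx⟩ := L.exists_causalCurve_through hlc.1
    (biIterate_rel (R := fun a b => L.causal a b ∧ a ≠ b) (fun y => ⟨hs_causal y, (hs_ne y).symm⟩)
      (fun y => ⟨ht_causal y, ht_ne y⟩) ⟨hpq, hne⟩)
  have hpS : γ ((-1 : ℤ) : ℝ) ∈ S := by rw [hγx]; exact hp
  have hqS : γ ((0 : ℤ) : ℝ) ∈ S := by rw [hγx]; exact hq
  have hinext := L.isDoublyInextCurve_of_biIterate happ hlc.1 hs_far ht_far hγ hγx
  have hγpq := (hS γ hinext).2 _ _ hpS hqS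
  rw [hγx, hγx] at hγpq
  exact hne hγpq

/-- Cauchy sets are acausal: no two distinct points of a Cauchy set are causally
related. -/
theorem LPLS.cauchySet_acausal {X : Type*} [MetricSpace X] [ProperSpace X]
    (L : LPLS X) (happ : L.Approximating) (hlc : L.HasLimitCurves)
    {S : Set X} (hS : L.IsCauchySet S) :
    ∀ p ∈ S, ∀ q ∈ S, L.causal p q → p = q :=
  LPLS.cauchySet_acausal_general L happ hlc hS
end

section
/- If t is a Cauchy time function on a Lorentzian pre-length space, then every level set t⁻¹({s}) is a Cauchy set: every doubly-inextendible causal curve meets it exactly once. -/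
open Set Filter Topology MeasureTheory TopologicalSpace

variable {X : Type*} [MetricSpace X]

namespace LPLS

theorem eq_of_causal_of_time_eq {L : LPLS X} {t : X → ℝ}
    (htime : ∀ p q : X, L.causal p q → p ≠ q → t p < t q) {p q : X} (hpq : L.causal p q)
    (h : t p = t q) : p = q :=
  by_contra fun hne => (htime p q hpq hne).ne h

theorem IsCausalCurveOn.eq_of_time_eq {L : LPLS X} {I : Set ℝ} {γ : ℝ → X} {t : X → ℝ}
    (hγ : L.IsCausalCurveOn I γ) (htime : ∀ p q : X, L.causal p q → p ≠ q → t p < t q)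
    {u v : ℝ} (hu : u ∈ I) (hv : v ∈ I) (h : t (γ u) = t (γ v)) : γ u = γ v := by
  rcases lt_trichotomy u v with huv | rfl | hvu
  · exact eq_of_causal_of_time_eq htime (hγ.2.2 hu hv huv) h
  · rfl
  · exact (eq_of_causal_of_time_eq htime (hγ.2.2 hv hu hvu) h.symm).symm

end LPLS

theorem LPLS.levelSet_isCauchySet_general {X : Type*} [MetricSpace X]
    (L : LPLS X) (t : X → ℝ)
    (htime : ∀ p q : X, L.causal p q → p ≠ q → t p < t q)
    (hcauchy : ∀ γ : ℝ → X, L.IsDoublyInextCurve γ → range (t ∘ γ) = univ) :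
    ∀ s : ℝ, L.IsCauchySet (t ⁻¹' {s}) := by
  intro s γ hγ
  refine ⟨?_, fun u v hu hv =>
    hγ.1.eq_of_time_eq htime (mem_univ u) (mem_univ v) (hu.trans hv.symm)⟩
  obtain ⟨u, hu⟩ : s ∈ range (t ∘ γ) := hcauchy γ hγ ▸ mem_univ s
  exact ⟨u, hu⟩

/-- Level sets of a Cauchy time function are Cauchy sets. -/
theorem LPLS.levelSet_isCauchySet {X : Type*} [MetricSpace X]
    (L : LPLS X) (t : X → ℝ) (ht : Continuous t)
    (htime : ∀ p q : X, L.causal p q → p ≠ q → t p < t q)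
    (hcauchy : ∀ γ : ℝ → X, L.IsDoublyInextCurve γ → range (t ∘ γ) = univ) :
    ∀ s : ℝ, L.IsCauchySet (t ⁻¹' {s}) :=
  LPLS.levelSet_isCauchySet_general L t htime hcauchy
end
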